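/- The full-space convolution identity in ℝ⁵: for all x ≠ y, ∫_{ℝ⁵} R_0(z − y) R_0(z − x) dz = 1/(16π²|x − y|). -/

import Mathlib

/-!
A translation by `y` and the reflection taking `x - y` to `c e₀`, `c = ‖x - y‖`, reduce the integral
to `(8π²)⁻² ∫ ‖z‖⁻³ ‖z - c e₀‖⁻³ dz`. Writing `z = (t, w) ∈ ℝ × ℝ⁴` and using polar coordinates in
`ℝ⁴`, the integral over `w` is `2π² ∫₀^∞ s³ (a² + s²)^(-3/2) (b² + s²)^(-3/2) ds = 2π² / (a + b)²`
with `a = |t|`, `b = |t - c|`; the radial integrand has the elementary primitive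
`-(s² + AB) / (AB (A + B)²)`, where `A = √(a² + s²)`, `B = √(b² + s²)`. Finally
`∫ dt / (|t| + |t - c|)² = 2 / c`.
-/

open MeasureTheory Real

noncomputable def R0 (x : EuclideanSpace ℝ (Fin 5)) : ℝ := 1 / (8 * π ^ 2 * ‖x‖ ^ 3)

open Set Filter Topology

theorem integral_comp_norm_norm_sub_of_norm_eq {E G : Type*} [NormedAddCommGroup E]
    [InnerProductSpace ℝ E] [FiniteDimensional ℝ E] [MeasurableSpace E] [BorelSpace E]
    [NormedAddCommGroup G] [NormedSpace ℝ G] (φ : ℝ → ℝ → G) {v w : E} (h : ‖v‖ = ‖w‖) :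
    ∫ z, φ ‖z‖ ‖z - v‖ = ∫ z, φ ‖z‖ ‖z - w‖ := by
  set ρ := (ℝ ∙ (w - v))ᗮ.reflection
  have hρ : ρ w = v := Submodule.reflection_sub h.symm
  rw [← integral_comp ρ]
  congr with z
  rw [← hρ, ← map_sub, LinearIsometryEquiv.norm_map, LinearIsometryEquiv.norm_map]

namespace EuclideanSpace

variable {n : ℕ}

noncomputable def consEquiv (n : ℕ) :
    ℝ × EuclideanSpace ℝ (Fin n) ≃ᵐ EuclideanSpace ℝ (Fin (n + 1)) :=
  ((MeasurableEquiv.refl ℝ).prodCongr (MeasurableEquiv.toLp 2 _).symm).trans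
    ((MeasurableEquiv.piFinSuccAbove (fun _ => ℝ) 0).symm.trans (MeasurableEquiv.toLp 2 _))

theorem consEquiv_apply (p : ℝ × EuclideanSpace ℝ (Fin n)) :
    consEquiv n p = WithLp.toLp 2 (Fin.cons p.1 p.2.ofLp) := by
  ext i
  simp [consEquiv, MeasurableEquiv.piFinSuccAbove_symm_apply, MeasurableEquiv.prodCongr]

theorem measurePreserving_consEquiv : MeasurePreserving (consEquiv n) := by
  refine .trans ?_
    ((volume_preserving_piFinSuccAbove _ 0).symm.trans (PiLp.volume_preserving_toLp _))
  rw [Measure.volume_eq_prod, Measure.volume_eq_prod]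
  exact (MeasurePreserving.id volume).prod (PiLp.volume_preserving_ofLp _)

theorem consEquiv_sub_consEquiv (p q : ℝ × EuclideanSpace ℝ (Fin n)) :
    consEquiv n p - consEquiv n q = consEquiv n (p - q) := by
  ext i
  refine Fin.cases ?_ (fun j => ?_) i <;> simp [consEquiv_apply]

theorem norm_consEquiv (p : ℝ × EuclideanSpace ℝ (Fin n)) :
    ‖consEquiv n p‖ = √(p.1 ^ 2 + ‖p.2‖ ^ 2) := by
  rw [EuclideanSpace.norm_eq, EuclideanSpace.norm_eq, Real.sq_sqrt (by positivity),
    Fin.sum_univ_succ]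
  simp [consEquiv_apply]

end EuclideanSpace

section RadialProfile

variable {a b : ℝ}

theorem hasDerivAt_sqrt_sq_add_sq {d : ℝ} (hd : d ≠ 0) (s : ℝ) :
    HasDerivAt (fun s => √(d ^ 2 + s ^ 2)) (s / √(d ^ 2 + s ^ 2)) s := by
  have := ((hasDerivAt_pow 2 s).const_add (d ^ 2)).sqrt (by positivity)
  exact this.congr_deriv (by field_simp; norm_num)

theorem hasDerivAt_primitive_pow_three_mul_inv_sqrt_pow_three (ha : a ≠ 0) (hb : b ≠ 0) (s : ℝ) :
    HasDerivAt
      (fun s => -(s ^ 2 + √(a ^ 2 + s ^ 2) * √(b ^ 2 + s ^ 2)) /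
        (√(a ^ 2 + s ^ 2) * √(b ^ 2 + s ^ 2) * (√(a ^ 2 + s ^ 2) + √(b ^ 2 + s ^ 2)) ^ 2))
      (s ^ 3 * (√(a ^ 2 + s ^ 2) ^ 3)⁻¹ * (√(b ^ 2 + s ^ 2) ^ 3)⁻¹) s := by
  have hA : 0 < √(a ^ 2 + s ^ 2) := sqrt_pos.2 (by positivity)
  have hB : 0 < √(b ^ 2 + s ^ 2) := sqrt_pos.2 (by positivity)
  have hA' := hasDerivAt_sqrt_sq_add_sq ha s
  have hB' := hasDerivAt_sqrt_sq_add_sq hb s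
  refine ((((hasDerivAt_pow 2 s).fun_add (hA'.fun_mul hB')).fun_neg).fun_div
    ((hA'.fun_mul hB').fun_mul ((hA'.fun_add hB').fun_pow 2)) (by positivity)).congr_deriv ?_
  field_simp
  ring

theorem tendsto_primitive_pow_three_mul_inv_sqrt_pow_three_atTop :
    Tendsto (fun s => -(s ^ 2 + √(a ^ 2 + s ^ 2) * √(b ^ 2 + s ^ 2)) /
        (√(a ^ 2 + s ^ 2) * √(b ^ 2 + s ^ 2) * (√(a ^ 2 + s ^ 2) + √(b ^ 2 + s ^ 2)) ^ 2))
      atTop (𝓝 0) := by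
  have hlim : Tendsto (fun s : ℝ => -(2 / s ^ 2)) atTop (𝓝 0) := by
    simpa [div_eq_mul_inv] using
      ((tendsto_pow_atTop (α := ℝ) two_ne_zero).inv_tendsto_atTop.const_mul 2).neg
  have hbound : ∀ {s A B : ℝ}, 0 < s → s ≤ A → s ≤ B →
      -(2 / s ^ 2) ≤ -(s ^ 2 + A * B) / (A * B * (A + B) ^ 2) ∧
        -(s ^ 2 + A * B) / (A * B * (A + B) ^ 2) ≤ 0 := by
    intro s A B hs hA hB
    have hA₀ : 0 < A := hs.trans_le hA
    have hB₀ : 0 < B := hs.trans_le hB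
    have hAB : s ^ 2 ≤ A * B := by nlinarith
    have hsum : s ^ 2 ≤ (A + B) ^ 2 := by nlinarith
    constructor
    · rw [neg_div, neg_le_neg_iff, div_le_div_iff₀ (by positivity) (by positivity)]
      nlinarith [mul_le_mul (by linarith : s ^ 2 + A * B ≤ 2 * (A * B)) hsum (by positivity)
        (by positivity)]
    · exact div_nonpos_of_nonpos_of_nonneg (by nlinarith) (by positivity)
  have hle : ∀ d {s : ℝ}, 0 < s → s ≤ √(d ^ 2 + s ^ 2) := fun d s hs =>
    le_sqrt_of_sq_le (by nlinarith)
  refine tendsto_of_tendsto_of_tendsto_of_le_of_le' hlim tendsto_const_nhds ?_ ?_ <;>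
    filter_upwards [eventually_gt_atTop 0] with s hs
  exacts [(hbound hs (hle a hs) (hle b hs)).1, (hbound hs (hle a hs) (hle b hs)).2]

theorem integral_Ioi_pow_three_mul_inv_sqrt_pow_three (ha : a ≠ 0) (hb : b ≠ 0) :
    IntegrableOn (fun s => s ^ 3 * (√(a ^ 2 + s ^ 2) ^ 3)⁻¹ * (√(b ^ 2 + s ^ 2) ^ 3)⁻¹) (Ioi 0) ∧
      ∫ s in Ioi 0, s ^ 3 * (√(a ^ 2 + s ^ 2) ^ 3)⁻¹ * (√(b ^ 2 + s ^ 2) ^ 3)⁻¹ =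
        ((|a| + |b|) ^ 2)⁻¹ := by
  have hderiv := fun s (_ : s ∈ Ici (0 : ℝ)) =>
    hasDerivAt_primitive_pow_three_mul_inv_sqrt_pow_three ha hb s
  have htend := tendsto_primitive_pow_three_mul_inv_sqrt_pow_three_atTop (a := a) (b := b)
  have hint := integrableOn_Ioi_deriv_of_nonneg' hderiv (fun s (hs : 0 < s) => by positivity) htend
  refine ⟨hint, ?_⟩
  rw [integral_Ioi_of_hasDerivAt_of_tendsto' hderiv hint htend]
  have hab : |a| + |b| ≠ 0 := by positivity
  simp only [zero_pow two_ne_zero, add_zero, sqrt_sq_eq_abs]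
  field_simp
  ring

theorem integral_euclideanSpace_fin_four_inv_sqrt_pow_three (ha : a ≠ 0) (hb : b ≠ 0) :
    Integrable (fun w : EuclideanSpace ℝ (Fin 4) =>
        (√(a ^ 2 + ‖w‖ ^ 2) ^ 3)⁻¹ * (√(b ^ 2 + ‖w‖ ^ 2) ^ 3)⁻¹) ∧
      ∫ w : EuclideanSpace ℝ (Fin 4), (√(a ^ 2 + ‖w‖ ^ 2) ^ 3)⁻¹ * (√(b ^ 2 + ‖w‖ ^ 2) ^ 3)⁻¹ =
        2 * π ^ 2 * ((|a| + |b|) ^ 2)⁻¹ := by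
  set f : ℝ → ℝ := fun s => (√(a ^ 2 + s ^ 2) ^ 3)⁻¹ * (√(b ^ 2 + s ^ 2) ^ 3)⁻¹
  have hprofile : (fun s => s ^ (4 - 1) • f s) =
      fun s => s ^ 3 * (√(a ^ 2 + s ^ 2) ^ 3)⁻¹ * (√(b ^ 2 + s ^ 2) ^ 3)⁻¹ := by
    ext s; simp only [f, smul_eq_mul]; ring
  have hball : volume.real (Metric.ball (0 : EuclideanSpace ℝ (Fin 4)) 1) = π ^ 2 / 2 := by
    simp only [measureReal_def, finrank_euclideanSpace, Fintype.card_fin, Nat.reduceMul,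
      InnerProductSpace.volume_ball_of_dim_even (k := 2), ENNReal.ofReal_one, one_pow,
      Nat.factorial_two, Nat.cast_ofNat, one_mul, ENNReal.toReal_ofReal_eq_iff]
    positivity
  obtain ⟨hint, hval⟩ := integral_Ioi_pow_three_mul_inv_sqrt_pow_three ha hb
  constructor
  · have := (integrable_fun_norm_addHaar (volume : Measure (EuclideanSpace ℝ (Fin 4))) (f := f)).2
    simp only [finrank_euclideanSpace_fin, hprofile] at this
    exact this hint
  · have := integral_fun_norm_addHaar (volume : Measure (EuclideanSpace ℝ (Fin 4))) f
    simp only [finrank_euclideanSpace_fin, hprofile, hval, hball] at this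
    rw [this]
    simp only [nsmul_eq_mul, smul_eq_mul, Nat.cast_ofNat]
    ring

end RadialProfile

section TwoPointProfile

variable {c : ℝ}

theorem integrable_inv_sq_abs_add_abs_sub (hc : 0 < c) :
    Integrable fun t : ℝ => ((|t| + |t - c|) ^ 2)⁻¹ := by
  have hdom : Integrable fun t : ℝ => 2 / c ^ 2 * (1 + (t / c) ^ 2)⁻¹ :=
    (integrable_inv_one_add_sq.comp_div hc.ne').const_mul _
  refine hdom.mono' (by fun_prop) (.of_forall fun t => ?_)
  have h1 : c ≤ |t| + |t - c| := by linarith [le_abs_self t, neg_le_abs (t - c)]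
  have h2 : |t| ≤ |t| + |t - c| := by linarith [abs_nonneg (t - c)]
  rw [Real.norm_of_nonneg (by positivity)]
  calc ((|t| + |t - c|) ^ 2)⁻¹ ≤ ((c ^ 2 + t ^ 2) / 2)⁻¹ :=
        inv_anti₀ (by positivity) (by nlinarith [sq_abs t, abs_nonneg t])
    _ = 2 / c ^ 2 * (1 + (t / c) ^ 2)⁻¹ := by field_simp

theorem integral_Ioi_inv_sq_mul_add {k a d : ℝ} (hk : 0 < k) (h : 0 < k * a + d) :
    ∫ t in Ioi a, ((k * t + d) ^ 2)⁻¹ = (k * (k * a + d))⁻¹ := by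
  have hderiv : ∀ t ∈ Ici a, HasDerivAt (fun t => -(k * (k * t + d))⁻¹) ((k * t + d) ^ 2)⁻¹ t := by
    intro t (ht : a ≤ t)
    have hkt : k * (k * t + d) ≠ 0 := by nlinarith [mul_le_mul_of_nonneg_left ht hk.le]
    refine (((((hasDerivAt_id' t).const_mul k).add_const d).const_mul k).fun_inv hkt).fun_neg
      |>.congr_deriv ?_
    field_simp
  have htend : Tendsto (fun t => -(k * (k * t + d))⁻¹) atTop (𝓝 0) := by
    have : Tendsto (fun t : ℝ => k * (k * t + d)) atTop atTop :=
      (tendsto_atTop_add_const_right _ d (tendsto_id.const_mul_atTop hk)).const_mul_atTop hk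
    simpa using this.inv_tendsto_atTop.neg
  have hint := integrableOn_Ioi_deriv_of_nonneg' hderiv (fun t _ => by positivity) htend
  rw [integral_Ioi_of_hasDerivAt_of_tendsto' hderiv hint htend]
  ring

theorem integral_inv_sq_abs_add_abs_sub (hc : 0 < c) :
    ∫ t : ℝ, ((|t| + |t - c|) ^ 2)⁻¹ = 2 / c := by
  have hint := integrable_inv_sq_abs_add_abs_sub hc
  have hleft : ∫ t in Iic 0, ((|t| + |t - c|) ^ 2)⁻¹ = (2 * c)⁻¹ := by
    have hreflect := integral_comp_neg_Ioi 0 fun t => ((|t| + |t - c|) ^ 2)⁻¹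
    rw [neg_zero] at hreflect
    rw [← hreflect, setIntegral_congr_fun measurableSet_Ioi (g := fun t => ((2 * t + c) ^ 2)⁻¹),
      integral_Ioi_inv_sq_mul_add two_pos (by linarith), mul_zero, zero_add]
    intro t (ht : 0 < t)
    dsimp only
    rw [abs_neg, abs_of_pos ht, abs_of_neg (by linarith)]
    ring
  have hmid : ∫ t in Ioc 0 c, ((|t| + |t - c|) ^ 2)⁻¹ = c⁻¹ := by
    rw [setIntegral_congr_fun measurableSet_Ioc (g := fun _ => (c ^ 2)⁻¹), setIntegral_const]
    · simp only [volume_real_Ioc, sub_zero, hc.le, sup_of_le_left, smul_eq_mul]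
      field_simp
    intro t ⟨ht₀, htc⟩
    dsimp only
    rw [abs_of_pos ht₀, abs_of_nonpos (by linarith)]
    ring
  have hright : ∫ t in Ioi c, ((|t| + |t - c|) ^ 2)⁻¹ = (2 * c)⁻¹ := by
    rw [setIntegral_congr_fun measurableSet_Ioi (g := fun t => ((2 * t + -c) ^ 2)⁻¹),
      integral_Ioi_inv_sq_mul_add two_pos (by linarith)]
    · ring
    intro t (ht : c < t)
    dsimp only
    rw [abs_of_pos (by linarith), abs_of_pos (by linarith)]
    ring
  have hIoi : ∫ t in Ioi 0, ((|t| + |t - c|) ^ 2)⁻¹ = c⁻¹ + (2 * c)⁻¹ := by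
    rw [← Ioc_union_Ioi_eq_Ioi hc.le, setIntegral_union (Ioc_disjoint_Ioi le_rfl)
      measurableSet_Ioi hint.integrableOn hint.integrableOn, hmid, hright]
  rw [← setIntegral_univ, ← Iic_union_Ioi (a := 0), setIntegral_union (Iic_disjoint_Ioi le_rfl)
    measurableSet_Ioi hint.integrableOn hint.integrableOn, hleft, hIoi]
  field_simp
  ring

end TwoPointProfile

open EuclideanSpace in
theorem integral_inv_norm_pow_three_mul_inv_norm_sub_pow_three {c : ℝ} (hc : 0 < c) :
    ∫ z : EuclideanSpace ℝ (Fin 5), (‖z‖ ^ 3)⁻¹ * (‖z - consEquiv 4 (c, 0)‖ ^ 3)⁻¹ =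
      4 * π ^ 2 / c := by
  let G : ℝ × EuclideanSpace ℝ (Fin 4) → ℝ := fun p =>
    (√(p.1 ^ 2 + ‖p.2‖ ^ 2) ^ 3)⁻¹ * (√((p.1 - c) ^ 2 + ‖p.2‖ ^ 2) ^ 3)⁻¹
  have hslice : ∀ᵐ t : ℝ, Integrable (fun w => G (t, w)) ∧
      ∫ w, G (t, w) = 2 * π ^ 2 * ((|t| + |t - c|) ^ 2)⁻¹ := by
    have hnull : volume ({0, c} : Set ℝ) = 0 := (toFinite _).measure_zero _
    filter_upwards [measure_eq_zero_iff_ae_notMem.1 hnull] with t ht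
    simp only [mem_insert_iff, mem_singleton_iff, not_or] at ht
    exact integral_euclideanSpace_fin_four_inv_sqrt_pow_three (a := t) (b := t - c) ht.1
      (sub_ne_zero.2 ht.2)
  have hG : Integrable G (volume.prod volume) := by
    refine (integrable_prod_iff (by fun_prop)).2 ⟨hslice.mono fun t ht => ht.1, ?_⟩
    refine ((integrable_inv_sq_abs_add_abs_sub hc).const_mul (2 * π ^ 2)).congr ?_
    filter_upwards [hslice] with t ht
    rw [← ht.2]
    congr with w
    exact (Real.norm_of_nonneg (by positivity)).symm
  calc ∫ z, (‖z‖ ^ 3)⁻¹ * (‖z - consEquiv 4 (c, 0)‖ ^ 3)⁻¹ = ∫ p, G p := by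
        rw [← measurePreserving_consEquiv.integral_comp']
        simp [G, consEquiv_sub_consEquiv, norm_consEquiv]
    _ = ∫ t, ∫ w, G (t, w) := by rw [Measure.volume_eq_prod, integral_prod G hG]
    _ = ∫ t, 2 * π ^ 2 * ((|t| + |t - c|) ^ 2)⁻¹ := integral_congr_ae (hslice.mono fun t ht => ht.2)
    _ = 4 * π ^ 2 / c := by
      rw [integral_const_mul, integral_inv_sq_abs_add_abs_sub hc]
      ring

open EuclideanSpace in
/-- Full-space convolution identity in `ℝ⁵`: for `x ≠ y`,
`∫_{ℝ⁵} R₀(z − y) R₀(z − x) dz = 1/(16π²|x − y|)`. -/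
theorem stmt5 (x y : EuclideanSpace ℝ (Fin 5)) (hxy : x ≠ y) :
    ∫ z, R0 (z - y) * R0 (z - x) = 1 / (16 * π ^ 2 * ‖x - y‖) := by
  have hc : 0 < ‖x - y‖ := norm_pos_iff.2 (sub_ne_zero.2 hxy)
  have hnorm : ‖x - y‖ = ‖consEquiv 4 (‖x - y‖, 0)‖ := by simp [norm_consEquiv]
  calc ∫ z, R0 (z - y) * R0 (z - x) = ∫ z, R0 z * R0 (z - (x - y)) := by
        rw [← integral_sub_right_eq_self (fun z => R0 z * R0 (z - (x - y))) y]
        simp only [sub_sub_sub_cancel_right]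
    _ = ∫ z, R0 z * R0 (z - consEquiv 4 (‖x - y‖, 0)) :=
        integral_comp_norm_norm_sub_of_norm_eq
          (fun r s => 1 / (8 * π ^ 2 * r ^ 3) * (1 / (8 * π ^ 2 * s ^ 3))) hnorm
    _ = (64 * π ^ 4)⁻¹ * ∫ z, (‖z‖ ^ 3)⁻¹ * (‖z - consEquiv 4 (‖x - y‖, 0)‖ ^ 3)⁻¹ := by
        rw [← integral_const_mul]
        congr with z
        simp only [R0, one_div, mul_inv]
        ring
    _ = 1 / (16 * π ^ 2 * ‖x - y‖) := by
        rw [integral_inv_norm_pow_three_mul_inv_norm_sub_pow_three hc]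
        field_simp
        ring
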